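/- Let K ∈ ℝ and let U, U₀, A, A₀, ν, ν₀, R, Ṙ : ℝ → ℝ be smooth 2π-periodic functions with R > 0, satisfying the two conformal constraint equations on the slice: (C1') U₀² + (U')² + (e^{4U}/(4R²))(A₀² + (A')²) + R''/R − ν₀Ṙ/R − ν'R'/R + (e^{2ν}K²)/(4R⁴) = 0, and (C2') 2U₀U' + (e^{4U}/(2R²))A₀A' + Ṙ'/R − ν'Ṙ/R − ν₀R'/R = 0 (primes denoting derivatives in the spatial variable ξ). Then either Ṙ(ξ)² − R'(ξ)² > 0 for every ξ, or else Ṙ ≡ 0, R' ≡ 0, U' ≡ 0, U₀ ≡ 0, A' ≡ 0, A₀ ≡ 0, and K = 0. -/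

import Mathlib

/-!
Put `λ₊ = Ṙ + R'` and `λ₋ = R' - Ṙ`. The sum and the difference of the constraints are linear
equations `λ±' = a± λ± - N±` with continuous `a±` and sources `N± ≥ 0`, so `exp (-∫ a±) λ±` is
antitone. Going once around the circle, a sign `λ± ≤ 0` or `λ± ≥ 0` at one point therefore
propagates to every point. Where `Ṙ² - R'² = -λ₊ λ₋ ≤ 0`, `λ₊` and `λ₋` have a common sign, which
then holds everywhere; so `R' = (λ₊ + λ₋) / 2` has a sign, the periodic `R` is constant, and
`Ṙ ≡ 0`. With `λ± ≡ 0` the equations force `N± ≡ 0`, a sum of squares that vanishes termwise.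
-/

open Real Function

section SignPropagation

variable {c : ℝ} {f a N : ℝ → ℝ}

theorem Function.Periodic.deriv (hf : Periodic f c) : Periodic (_root_.deriv f) c := fun x => by
  rw [← deriv_comp_add_const, show (fun y => f (y + c)) = f from funext hf]

theorem Function.Periodic.eq_of_monotone (hf : Periodic f c) (hc : 0 < c) (hm : Monotone f)
    (x y : ℝ) : f x = f y := by
  have hle : ∀ x y, f x ≤ f y := fun x y => by
    obtain ⟨y', hy', hfy⟩ := hf.exists_mem_Ico hc y x
    exact hfy ▸ hm hy'.1
  exact le_antisymm (hle x y) (hle y x)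

theorem Function.Periodic.eq_of_antitone (hf : Periodic f c) (hc : 0 < c) (hm : Antitone f)
    (x y : ℝ) : f x = f y :=
  neg_inj.mp ((hf.comp Neg.neg).eq_of_monotone hc hm.neg x y)

theorem antitone_exp_neg_integral_mul (ha : Continuous a)
    (hode : ∀ x, HasDerivAt f (a x * f x - N x) x) (hN : ∀ x, 0 ≤ N x) :
    Antitone fun x => exp (-∫ t in (0 : ℝ)..x, a t) * f x := by
  have hder : ∀ x, HasDerivAt (fun x => exp (-∫ t in (0 : ℝ)..x, a t) * f x)
      (-(exp (-∫ t in (0 : ℝ)..x, a t) * N x)) x := fun x =>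
    ((ha.integral_hasStrictDerivAt 0 x).hasDerivAt.neg.exp.mul (hode x)).congr_deriv (by simp only [Pi.neg_apply]; ring)
  refine antitone_of_deriv_nonpos (fun x => (hder x).differentiableAt) fun x => ?_
  rw [(hder x).deriv]
  exact neg_nonpos.mpr (mul_nonneg (exp_pos _).le (hN x))

theorem Function.Periodic.nonpos_of_hasDerivAt (hf : Periodic f c) (hc : 0 < c)
    (ha : Continuous a) (hode : ∀ x, HasDerivAt f (a x * f x - N x) x) (hN : ∀ x, 0 ≤ N x)
    {x : ℝ} (hx : f x ≤ 0) (y : ℝ) : f y ≤ 0 := by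
  obtain ⟨y', hy', hfy⟩ := hf.exists_mem_Ico hc y x
  rw [hfy]
  exact nonpos_of_mul_nonpos_right ((antitone_exp_neg_integral_mul ha hode hN hy'.1).trans
    (mul_nonpos_of_nonneg_of_nonpos (exp_pos _).le hx)) (exp_pos _)

theorem Function.Periodic.nonneg_of_hasDerivAt (hf : Periodic f c) (hc : 0 < c)
    (ha : Continuous a) (hode : ∀ x, HasDerivAt f (a x * f x - N x) x) (hN : ∀ x, 0 ≤ N x)
    {x : ℝ} (hx : 0 ≤ f x) (y : ℝ) : 0 ≤ f y := by
  obtain ⟨y', hy', hfy⟩ := hf.exists_mem_Ico hc y (x - c)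
  rw [hfy]
  have hy'x : y' ≤ x := by linarith [hy'.2]
  exact nonneg_of_mul_nonneg_right ((mul_nonneg (exp_pos _).le hx).trans
    (antitone_exp_neg_integral_mul ha hode hN hy'x)) (exp_pos _)

theorem eq_zero_of_hasDerivAt_of_forall_eq_zero (hode : ∀ x, HasDerivAt f (a x * f x - N x) x)
    (hf : ∀ x, f x = 0) (x : ℝ) : N x = 0 := by
  have h := hode x
  rw [show f = fun _ => 0 from funext hf] at h
  simpa using h.unique (hasDerivAt_const x 0)

end SignPropagation

theorem forall_eq_zero_of_sq_sub_sq_deriv_nonpos {c : ℝ} {F G a b N M : ℝ → ℝ} (hc : 0 < c)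
    (hF : Differentiable ℝ F) (hFper : Periodic F c) (hGper : Periodic G c)
    (ha : Continuous a) (hb : Continuous b)
    (hp : ∀ x, HasDerivAt (fun x => G x + deriv F x) (a x * (G x + deriv F x) - N x) x)
    (hm : ∀ x, HasDerivAt (fun x => deriv F x - G x) (b x * (deriv F x - G x) - M x) x)
    (hN : ∀ x, 0 ≤ N x) (hM : ∀ x, 0 ≤ M x) {x₀ : ℝ} (hx₀ : G x₀ ^ 2 - deriv F x₀ ^ 2 ≤ 0) :
    (∀ x, G x = 0) ∧ ∀ x, deriv F x = 0 := by
  have hpper : Periodic (fun x => G x + deriv F x) c := hGper.add hFper.deriv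
  have hmper : Periodic (fun x => deriv F x - G x) c := hFper.deriv.sub hGper
  have hsign : (∀ x, 0 ≤ G x + deriv F x ∧ 0 ≤ deriv F x - G x) ∨
      (∀ x, G x + deriv F x ≤ 0 ∧ deriv F x - G x ≤ 0) := by
    rcases mul_nonneg_iff.mp (show 0 ≤ (G x₀ + deriv F x₀) * (deriv F x₀ - G x₀) by nlinarith)
      with ⟨hp₀, hm₀⟩ | ⟨hp₀, hm₀⟩
    · exact .inl fun x => ⟨hpper.nonneg_of_hasDerivAt hc ha hp hN hp₀ x,
        hmper.nonneg_of_hasDerivAt hc hb hm hM hm₀ x⟩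
    · exact .inr fun x => ⟨hpper.nonpos_of_hasDerivAt hc ha hp hN hp₀ x,
        hmper.nonpos_of_hasDerivAt hc hb hm hM hm₀ x⟩
  have hFconst : ∀ x, F x = F 0 := by
    rcases hsign with h | h
    · exact fun x => hFper.eq_of_monotone hc
        (monotone_of_deriv_nonneg hF fun x => by linarith [h x]) x 0
    · exact fun x => hFper.eq_of_antitone hc
        (antitone_of_deriv_nonpos hF fun x => by linarith [h x]) x 0
  have hF' : ∀ x, deriv F x = 0 := fun x => by
    rw [show F = fun _ => F 0 from funext hFconst, deriv_const]
  refine ⟨fun x => ?_, hF'⟩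
  rcases hsign with h | h <;> linarith [h x, hF' x]

namespace ConformalConstraints

/-- The source `N₊` of the paper; `N₋` is `source K r u u₀ (-u') a₀ (-a') ν`. -/
noncomputable def source (K r u u₀ u' a₀ a' ν : ℝ) : ℝ :=
  r * (u₀ + u') ^ 2 + exp (4 * u) / (4 * r) * (a₀ + a') ^ 2 + exp (2 * ν) * K ^ 2 / (4 * r ^ 3)

variable {K r r' r'' r₀ r₀' u u₀ u' a₀ a' ν ν₀ ν' : ℝ}

theorem source_nonneg (hr : 0 < r) : 0 ≤ source K r u u₀ u' a₀ a' ν := by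
  unfold source
  positivity

theorem eq_zero_of_source_eq_zero (hr : 0 < r) (hp : source K r u u₀ u' a₀ a' ν = 0)
    (hm : source K r u u₀ (-u') a₀ (-a') ν = 0) : u₀ = 0 ∧ u' = 0 ∧ a₀ = 0 ∧ a' = 0 ∧ K = 0 := by
  unfold source at hp hm
  obtain ⟨hp', hK⟩ := (add_eq_zero_iff_of_nonneg (by positivity) (by positivity)).mp hp
  obtain ⟨hup, hap⟩ := (add_eq_zero_iff_of_nonneg (by positivity) (by positivity)).mp hp'
  obtain ⟨hm', -⟩ := (add_eq_zero_iff_of_nonneg (by positivity) (by positivity)).mp hm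
  obtain ⟨hum, ham⟩ := (add_eq_zero_iff_of_nonneg (by positivity) (by positivity)).mp hm'
  simp [hr.ne', (exp_pos _).ne'] at hK hup hap hum ham
  refine ⟨by linarith, by linarith, by linarith, by linarith, hK⟩

theorem add_eq_and_sub_eq_of_constraints (hr : 0 < r)
    (hC1 : u₀ ^ 2 + u' ^ 2 + exp (4 * u) / (4 * r ^ 2) * (a₀ ^ 2 + a' ^ 2) + r'' / r
      - ν₀ * r₀ / r - ν' * r' / r + exp (2 * ν) * K ^ 2 / (4 * r ^ 4) = 0)
    (hC2 : 2 * u₀ * u' + exp (4 * u) / (2 * r ^ 2) * (a₀ * a') + r₀' / r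
      - ν' * r₀ / r - ν₀ * r' / r = 0) :
    r₀' + r'' = (ν₀ + ν') * (r₀ + r') - source K r u u₀ u' a₀ a' ν ∧
      r'' - r₀' = (ν' - ν₀) * (r' - r₀) - source K r u u₀ (-u') a₀ (-a') ν := by
  unfold source
  constructor
  · linear_combination (norm := (field_simp; ring)) r * hC1 + r * hC2
  · linear_combination (norm := (field_simp; ring)) r * hC1 - r * hC2

end ConformalConstraints

open ConformalConstraints

theorem gradient_of_area_timelike_or_flat_general
    (K : ℝ) (U U₀ A A₀ ν ν₀ R Rdot : ℝ → ℝ)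
    (hν : ContDiff ℝ (⊤ : ℕ∞) ν) (hν₀ : ContDiff ℝ (⊤ : ℕ∞) ν₀)
    (hR : ContDiff ℝ (⊤ : ℕ∞) R) (hRdot : ContDiff ℝ (⊤ : ℕ∞) Rdot)
    (hRper : ∀ ξ : ℝ, R (ξ + 2 * Real.pi) = R ξ)
    (hRdotper : ∀ ξ : ℝ, Rdot (ξ + 2 * Real.pi) = Rdot ξ)
    (hRpos : ∀ ξ : ℝ, 0 < R ξ)
    (hC1 : ∀ ξ : ℝ,
      (U₀ ξ) ^ 2 + (deriv U ξ) ^ 2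
        + Real.exp (4 * U ξ) / (4 * (R ξ) ^ 2) * ((A₀ ξ) ^ 2 + (deriv A ξ) ^ 2)
        + deriv (deriv R) ξ / R ξ
        - ν₀ ξ * Rdot ξ / R ξ
        - deriv ν ξ * deriv R ξ / R ξ
        + Real.exp (2 * ν ξ) * K ^ 2 / (4 * (R ξ) ^ 4) = 0)
    (hC2 : ∀ ξ : ℝ,
      2 * U₀ ξ * deriv U ξ
        + Real.exp (4 * U ξ) / (2 * (R ξ) ^ 2) * (A₀ ξ * deriv A ξ)
        + deriv Rdot ξ / R ξ
        - deriv ν ξ * Rdot ξ / R ξ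
        - ν₀ ξ * deriv R ξ / R ξ = 0) :
    (∀ ξ : ℝ, 0 < (Rdot ξ) ^ 2 - (deriv R ξ) ^ 2) ∨
      ((∀ ξ : ℝ, Rdot ξ = 0) ∧ (∀ ξ : ℝ, deriv R ξ = 0) ∧
        (∀ ξ : ℝ, deriv U ξ = 0) ∧ (∀ ξ : ℝ, U₀ ξ = 0) ∧
        (∀ ξ : ℝ, deriv A ξ = 0) ∧ (∀ ξ : ℝ, A₀ ξ = 0) ∧ K = 0) := by
  refine or_iff_not_imp_left.2 fun hnot => ?_
  obtain ⟨ξ₀, hξ₀⟩ := not_forall.mp hnot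
  obtain ⟨hRd, hR'⟩ := contDiff_infty_iff_deriv.mp hR
  have hν' := (contDiff_infty_iff_deriv.mp hν).2.continuous
  have hode := fun ξ => add_eq_and_sub_eq_of_constraints (hRpos ξ) (hC1 ξ) (hC2 ξ)
  have hp : ∀ ξ, HasDerivAt (fun ξ => Rdot ξ + deriv R ξ) ((ν₀ ξ + deriv ν ξ) *
      (Rdot ξ + deriv R ξ) - source K (R ξ) (U ξ) (U₀ ξ) (deriv U ξ) (A₀ ξ) (deriv A ξ) (ν ξ)) ξ :=
    fun ξ => ((hRdot.differentiable (by simp) ξ).hasDerivAt.add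
      (hR'.differentiable (by simp) ξ).hasDerivAt).congr_deriv (hode ξ).1
  have hm : ∀ ξ, HasDerivAt (fun ξ => deriv R ξ - Rdot ξ) ((deriv ν ξ - ν₀ ξ) *
      (deriv R ξ - Rdot ξ) -
        source K (R ξ) (U ξ) (U₀ ξ) (-deriv U ξ) (A₀ ξ) (-deriv A ξ) (ν ξ)) ξ :=
    fun ξ => ((hR'.differentiable (by simp) ξ).hasDerivAt.sub
      (hRdot.differentiable (by simp) ξ).hasDerivAt).congr_deriv (hode ξ).2
  obtain ⟨hRdot0, hR'0⟩ := forall_eq_zero_of_sq_sub_sq_deriv_nonpos two_pi_pos hRd hRper hRdotper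
    (hν₀.continuous.add hν') (hν'.sub hν₀.continuous) hp hm (fun ξ => source_nonneg (hRpos ξ))
    (fun ξ => source_nonneg (hRpos ξ)) (not_lt.mp hξ₀)
  have hflat := fun ξ => eq_zero_of_source_eq_zero (hRpos ξ)
    (eq_zero_of_hasDerivAt_of_forall_eq_zero hp (by simp [hRdot0, hR'0]) ξ)
    (eq_zero_of_hasDerivAt_of_forall_eq_zero hm (by simp [hRdot0, hR'0]) ξ)
  exact ⟨hRdot0, hR'0, fun ξ => (hflat ξ).2.1, fun ξ => (hflat ξ).1, fun ξ => (hflat ξ).2.2.2.1,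
    fun ξ => (hflat ξ).2.2.1, (hflat 0).2.2.2.2⟩

/-- **The gradient of the area function is timelike unless the data are trivial**
(coordinate version, on a slice of constant conformal time).
If smooth `2π`-periodic functions `(U, U₀, A, A₀, ν, ν₀, R, Rdot)` with `R > 0`
satisfy the conformal constraint equations (C1') and (C2'), then either
`Ṙ² − (R')² > 0` everywhere, or else `Ṙ ≡ 0`, `R' ≡ 0`, `U' ≡ 0`, `U₀ ≡ 0`,
`A' ≡ 0`, `A₀ ≡ 0` and `K = 0`. -/
theorem gradient_of_area_timelike_or_flat
    (K : ℝ) (U U₀ A A₀ ν ν₀ R Rdot : ℝ → ℝ)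
    (hU : ContDiff ℝ (⊤ : ℕ∞) U) (hU₀ : ContDiff ℝ (⊤ : ℕ∞) U₀)
    (hA : ContDiff ℝ (⊤ : ℕ∞) A) (hA₀ : ContDiff ℝ (⊤ : ℕ∞) A₀)
    (hν : ContDiff ℝ (⊤ : ℕ∞) ν) (hν₀ : ContDiff ℝ (⊤ : ℕ∞) ν₀)
    (hR : ContDiff ℝ (⊤ : ℕ∞) R) (hRdot : ContDiff ℝ (⊤ : ℕ∞) Rdot)
    (hUper : ∀ ξ : ℝ, U (ξ + 2 * Real.pi) = U ξ)
    (hU₀per : ∀ ξ : ℝ, U₀ (ξ + 2 * Real.pi) = U₀ ξ)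
    (hAper : ∀ ξ : ℝ, A (ξ + 2 * Real.pi) = A ξ)
    (hA₀per : ∀ ξ : ℝ, A₀ (ξ + 2 * Real.pi) = A₀ ξ)
    (hνper : ∀ ξ : ℝ, ν (ξ + 2 * Real.pi) = ν ξ)
    (hν₀per : ∀ ξ : ℝ, ν₀ (ξ + 2 * Real.pi) = ν₀ ξ)
    (hRper : ∀ ξ : ℝ, R (ξ + 2 * Real.pi) = R ξ)
    (hRdotper : ∀ ξ : ℝ, Rdot (ξ + 2 * Real.pi) = Rdot ξ)
    (hRpos : ∀ ξ : ℝ, 0 < R ξ)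
    (hC1 : ∀ ξ : ℝ,
      (U₀ ξ) ^ 2 + (deriv U ξ) ^ 2
        + Real.exp (4 * U ξ) / (4 * (R ξ) ^ 2) * ((A₀ ξ) ^ 2 + (deriv A ξ) ^ 2)
        + deriv (deriv R) ξ / R ξ
        - ν₀ ξ * Rdot ξ / R ξ
        - deriv ν ξ * deriv R ξ / R ξ
        + Real.exp (2 * ν ξ) * K ^ 2 / (4 * (R ξ) ^ 4) = 0)
    (hC2 : ∀ ξ : ℝ,
      2 * U₀ ξ * deriv U ξ
        + Real.exp (4 * U ξ) / (2 * (R ξ) ^ 2) * (A₀ ξ * deriv A ξ)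
        + deriv Rdot ξ / R ξ
        - deriv ν ξ * Rdot ξ / R ξ
        - ν₀ ξ * deriv R ξ / R ξ = 0) :
    (∀ ξ : ℝ, 0 < (Rdot ξ) ^ 2 - (deriv R ξ) ^ 2) ∨
      ((∀ ξ : ℝ, Rdot ξ = 0) ∧ (∀ ξ : ℝ, deriv R ξ = 0) ∧
        (∀ ξ : ℝ, deriv U ξ = 0) ∧ (∀ ξ : ℝ, U₀ ξ = 0) ∧
        (∀ ξ : ℝ, deriv A ξ = 0) ∧ (∀ ξ : ℝ, A₀ ξ = 0) ∧ K = 0) :=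
  gradient_of_area_timelike_or_flat_general K U U₀ A A₀ ν ν₀ R Rdot hν hν₀ hR hRdot hRper hRdotper
    hRpos hC1 hC2
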